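/- Abstract realization lemma: let V be a finite set of ℤ-valued knot invariants graded by order, suppose (i) for each n, any two knots with equal invariants of order < n are connected by a finite sequence of Cₙ-moves, (ii) each Cₙ-move changes invariants of order < n by zero, (iii) each combinatorial pattern of Cₙ-move can be realized preserving a property P of knots, and (iv) each pattern can be replaced by one with the opposite effect on order-n invariants. If some knot Q₀ with property P matches K in all invariants of order ≤ 2, then for every n there is a knot Q with property P matching K in all invariants of order ≤ n. -/
import Mathlib


/-- Abstract realization lemma: `𝒦` a type of knots, `P` a property (quasipositivity),
`v i` the invariants of order `i`, `R n` the `Cₙ`-move relation. If (i) knots with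
equal invariants of order `< n` are connected by `Cₙ`-moves, (ii) a `Cₙ`-move preserves
invariants of order `< n`, and (iii)+(iv) each `Cₙ`-move effect can be realized, with
either sign, by a move preserving `P` and the lower-order invariants, then any knot `Q₀`
with property `P` matching `K` in all invariants of order `≤ 2` yields, for every `n`,
a knot `Q` with property `P` matching `K` in all invariants of order `≤ n`. -/
theorem abstract_realization {𝒦 : Type*} (P : 𝒦 → Prop) (v : ℕ → 𝒦 → ℤ)
    (R : ℕ → 𝒦 → 𝒦 → Prop)
    (hmove : ∀ n A B, R n A B → ∀ i < n, v i A = v i B)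
    (hhabiro : ∀ n A B, (∀ i < n, v i A = v i B) →
      Relation.ReflTransGen (fun x y => R n x y ∨ R n y x) A B)
    (hrealize : ∀ n A B A', (R n A B ∨ R n B A) → P A' →
      (∀ i < n, v i A' = v i A) →
      ∃ B', P B' ∧ (∀ i < n, v i B' = v i A') ∧
        v n B' - v n A' = v n B - v n A)
    (K Q₀ : 𝒦) (hP₀ : P Q₀) (h₀ : ∀ i ≤ 2, v i Q₀ = v i K) :
    ∀ n : ℕ, ∃ Q : 𝒦, P Q ∧ ∀ i ≤ n, v i Q = v i K := by
  have key : ∀ n A B, Relation.ReflTransGen (fun x y => R n x y ∨ R n y x) A B →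
      ∀ W, P W → (∀ i < n, v i W = v i A) →
      ∃ W', P W' ∧ (∀ i < n, v i W' = v i W) ∧ v n W' - v n W = v n B - v n A := by
    intro n A B h
    induction h using Relation.ReflTransGen.head_induction_on with
    | refl =>
      intro W hW _
      exact ⟨W, hW, fun i _ => rfl, by ring⟩
    | head hAC hCB ih =>
      rename_i X Y
      intro W hW hWA
      obtain ⟨W₁, hW₁, hlow₁, hdiff₁⟩ := hrealize n X Y W hAC hW hWA
      have hAC' : ∀ i < n, v i X = v i Y := by
        intro i hi
        rcases hAC with h' | h'
        · exact hmove n X Y h' i hi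
        · exact (hmove n Y X h' i hi).symm
      obtain ⟨W', hW', hlow', hdiff'⟩ := ih W₁ hW₁
        (fun i hi => by rw [hlow₁ i hi, hWA i hi, hAC' i hi])
      refine ⟨W', hW', fun i hi => by rw [hlow' i hi, hlow₁ i hi], by linarith⟩
  intro n
  induction n with
  | zero => exact ⟨Q₀, hP₀, fun i hi => h₀ i (le_trans hi (by norm_num))⟩
  | succ n ih =>
    obtain ⟨Q, hPQ, hQ⟩ := ih
    have hchain := hhabiro (n + 1) Q K (fun i hi => hQ i (Nat.lt_succ_iff.mp hi))
    obtain ⟨Q', hPQ', hlow, hdiff⟩ := key (n + 1) Q K hchain Q hPQ (fun i _ => rfl)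
    refine ⟨Q', hPQ', fun i hi => ?_⟩
    rcases Nat.lt_or_ge i (n + 1) with h | h
    · rw [hlow i h, hQ i (Nat.lt_succ_iff.mp h)]
    · have : i = n + 1 := le_antisymm hi h
      subst this
      linarith
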